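/- Let V be a real inner product space and let v₁,…,v_n ∈ V. Among all r-dimensional subspaces W ⊆ span{v₁,…,v_n}, the sum of squared projection errors Σᵢ ‖vᵢ − P_W vᵢ‖² is minimized by the span of the top r eigenvectors of the Gram operator G = Σᵢ vᵢ ⊗ vᵢ, and the minimal value equals the sum of the eigenvalues of G beyond the r largest. -/

import Mathlib

/-!
If `u₁, …, u_r` is an orthonormal basis of `W`, the projection error is
`∑ᵢ ‖vᵢ‖² - ∑ₖ ⟪G uₖ, uₖ⟫`, so an optimal `W` maximises the trace of `G` compressed to `W`.
On `S` the operator `G` is symmetric with an orthonormal eigenbasis `e` and decreasing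
eigenvalues `μ`. In that basis the compressed trace is `∑ⱼ μⱼ cⱼ` with weights
`cⱼ = ∑ₖ ⟪eⱼ, uₖ⟫² ∈ [0, 1]` summing to `r` (Bessel and Parseval), and such a weighted sum of
decreasing numbers is at most `μ₁ + ⋯ + μ_r` (Ky Fan), which is attained by the top `r`
eigenvectors. As `∑ᵢ ‖vᵢ‖² = tr G = ∑ⱼ μⱼ`, the minimal error is the tail sum of the `μⱼ`.
-/

open Finset RealInnerProductSpace Submodule

theorem Finset.sum_mul_le_sum_of_threshold {ι : Type*} [Fintype ι] (s : Finset ι)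
    {μ c : ι → ℝ} (t : ℝ) (hs : ∀ j ∈ s, t ≤ μ j) (hsc : ∀ j ∉ s, μ j ≤ t)
    (hc0 : ∀ j, 0 ≤ c j) (hc1 : ∀ j, c j ≤ 1) (hc : ∑ j, c j = #s) :
    ∑ j, μ j * c j ≤ ∑ j ∈ s, μ j := by
  classical
  -- `(𝟙ₛ - c) (μ - t) ≥ 0` termwise, and its sum is the gap because `∑ c = #s`.
  have hpoint : ∀ j, 0 ≤ (if j ∈ s then μ j - t else 0) - c j * (μ j - t) := by
    intro j
    split_ifs with hj
    · nlinarith [hs j hj, hc1 j]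
    · nlinarith [hsc j hj, hc0 j]
  have hsum : ∑ j, ((if j ∈ s then μ j - t else 0) - c j * (μ j - t))
      = ∑ j ∈ s, μ j - ∑ j, μ j * c j := by
    have hlin : ∑ j, c j * (μ j - t) = ∑ j, μ j * c j - #s * t := by
      rw [← hc, sum_mul, ← sum_sub_distrib]
      exact sum_congr rfl fun j _ => by ring
    rw [sum_sub_distrib, sum_ite_mem, univ_inter, sum_sub_distrib, sum_const, nsmul_eq_mul, hlin]
    ring
  linarith [sum_nonneg fun j (_ : j ∈ univ) => hpoint j]

theorem Antitone.sum_mul_le_sum_filter_lt {d r : ℕ} {μ c : Fin d → ℝ} (hμ : Antitone μ)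
    (hr : r ≤ d) (hc0 : ∀ j, 0 ≤ c j) (hc1 : ∀ j, c j ≤ 1) (hc : ∑ j, c j = r) :
    ∑ j, μ j * c j ≤ ∑ j ∈ univ.filter (fun j : Fin d => (j : ℕ) < r), μ j := by
  have hcard : ∑ j, c j = #(univ.filter fun j : Fin d => (j : ℕ) < r) := by
    rw [Fin.card_filter_val_lt, min_eq_right hr, hc]
  obtain hrd | rfl := hr.lt_or_eq
  · refine sum_mul_le_sum_of_threshold _ (μ ⟨r, hrd⟩) (fun j hj => hμ ?_) (fun j hj => hμ ?_)
      hc0 hc1 hcard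
    · exact Fin.le_def.mpr (mem_filter.mp hj).2.le
    · exact Fin.le_def.mpr (not_lt.mp fun h => hj (mem_filter.mpr ⟨mem_univ j, h⟩))
  -- For `r = d` every index is on top, so any lower bound of `μ` serves as threshold.
  · exact sum_mul_le_sum_of_threshold _ (⨅ j, μ j)
      (fun j _ => ciInf_le (Set.finite_range μ).bddBelow j) (fun j hj => by simp at hj)
      hc0 hc1 hcard

section Orthonormal

variable {V : Type*} [NormedAddCommGroup V] [InnerProductSpace ℝ V]
  {ι : Type*} [Fintype ι] {f : ι → V}

theorem Submodule.span_range_coe_orthonormalBasis {𝕜 E : Type*} [RCLike 𝕜]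
    [NormedAddCommGroup E] [InnerProductSpace 𝕜 E] {W : Submodule 𝕜 E}
    (b : OrthonormalBasis ι 𝕜 W) : span 𝕜 (Set.range fun k => (b k : E)) = W := by
  rw [show (fun k => (b k : E)) = W.subtype ∘ b from rfl, Set.range_comp, span_image,
    ← b.coe_toBasis, b.toBasis.span_eq, map_subtype_top]

theorem Orthonormal.sum_inner_smul_of_mem_span (hf : Orthonormal ℝ f) {x : V}
    (hx : x ∈ span ℝ (Set.range f)) : ∑ k, ⟪f k, x⟫ • f k = x := by
  obtain ⟨c, rfl⟩ := (mem_span_range_iff_exists_fun ℝ).mp hx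
  simp_rw [hf.inner_right_fintype]

theorem Orthonormal.sum_inner_sq_of_mem_span (hf : Orthonormal ℝ f) {x : V}
    (hx : x ∈ span ℝ (Set.range f)) : ∑ k, ⟪f k, x⟫ ^ 2 = ‖x‖ ^ 2 := by
  calc ∑ k, ⟪f k, x⟫ ^ 2 = ⟪∑ k, ⟪f k, x⟫ • f k, x⟫ := by
        simp only [sum_inner, real_inner_smul_left, sq]
    _ = ‖x‖ ^ 2 := by rw [hf.sum_inner_smul_of_mem_span hx, real_inner_self_eq_norm_sq]

theorem Orthonormal.inner_apply_self_of_mem_span (hf : Orthonormal ℝ f) (T : V →ₗ[ℝ] V)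
    {μ : ι → ℝ} (hT : ∀ k, T (f k) = μ k • f k) {x : V} (hx : x ∈ span ℝ (Set.range f)) :
    ⟪T x, x⟫ = ∑ k, μ k * ⟪f k, x⟫ ^ 2 := by
  nth_rewrite 1 [← hf.sum_inner_smul_of_mem_span hx]
  simp only [map_sum, map_smul, hT, smul_smul, sum_inner, real_inner_smul_left, sq]
  exact sum_congr rfl fun k _ => by ring

theorem Orthonormal.norm_sub_sum_smul_sq (hf : Orthonormal ℝ f) (x : V) (c : ι → ℝ) :
    ‖x - ∑ k, c k • f k‖ ^ 2 = ‖x‖ ^ 2 - ∑ k, ⟪f k, x⟫ ^ 2 + ∑ k, (c k - ⟪f k, x⟫) ^ 2 := by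
  have hcross : ⟪x, ∑ k, c k • f k⟫ = ∑ k, c k * ⟪f k, x⟫ := by
    simp only [inner_sum, real_inner_smul_right, real_inner_comm x]
  have hnorm : ‖∑ k, c k • f k‖ ^ 2 = ∑ k, c k ^ 2 := by
    rw [← real_inner_self_eq_norm_sq, hf.inner_sum]
    simp [sq]
  have hexpand : ∑ k, (c k - ⟪f k, x⟫) ^ 2 =
      ∑ k, c k ^ 2 - 2 * ∑ k, c k * ⟪f k, x⟫ + ∑ k, ⟪f k, x⟫ ^ 2 := by
    simp only [sub_sq, sum_add_distrib, sum_sub_distrib, mul_sum, mul_assoc]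
  rw [norm_sub_sq_real, hcross, hnorm, hexpand]
  ring

theorem Orthonormal.iInf_norm_sub_sq_span (hf : Orthonormal ℝ f) (x : V) :
    ⨅ w : span ℝ (Set.range f), ‖x - (w : V)‖ ^ 2 = ‖x‖ ^ 2 - ∑ k, ⟪f k, x⟫ ^ 2 := by
  refine le_antisymm ?_ (le_ciInf fun w => ?_)
  · have hproj : ∑ k, ⟪f k, x⟫ • f k ∈ span ℝ (Set.range f) :=
      sum_mem fun k _ => smul_mem _ _ (subset_span ⟨k, rfl⟩)
    refine (ciInf_le ⟨0, ?_⟩ ⟨_, hproj⟩).trans_eq ?_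
    · rintro _ ⟨w, rfl⟩
      positivity
    · simp [hf.norm_sub_sum_smul_sq]
  · rw [← hf.sum_inner_smul_of_mem_span w.2, hf.norm_sub_sum_smul_sq]
    exact le_add_of_nonneg_right (sum_nonneg fun k _ => sq_nonneg _)

end Orthonormal

section Spectral

variable {V : Type*} [NormedAddCommGroup V] [InnerProductSpace ℝ V]

theorem LinearMap.IsSymmetric.exists_orthonormal_eigenvectors_antitone {T : V →ₗ[ℝ] V}
    (hT : T.IsSymmetric) {S : Submodule ℝ V} [FiniteDimensional ℝ S] (hTS : ∀ x ∈ S, T x ∈ S) :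
    ∃ (e : Fin (Module.finrank ℝ S) → V) (μ : Fin (Module.finrank ℝ S) → ℝ),
      Orthonormal ℝ e ∧ (∀ j, T (e j) = μ j • e j) ∧ Antitone μ ∧ span ℝ (Set.range e) = S := by
  have hT' := hT.restrict_invariant hTS
  refine ⟨fun j => (hT'.eigenvectorBasis rfl j : V), hT'.eigenvalues rfl, ?_, fun j => ?_,
    hT'.eigenvalues_antitone rfl, span_range_coe_orthonormalBasis _⟩
  · exact S.subtypeₗᵢ.orthonormal_comp_iff.mpr (hT'.eigenvectorBasis rfl).orthonormal
  · exact congrArg Subtype.val (hT'.apply_eigenvectorBasis rfl j)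

theorem sum_inner_apply_le_sum_eigenvalues (T : V →ₗ[ℝ] V) {d : ℕ} {e : Fin d → V}
    {μ : Fin d → ℝ} (he : Orthonormal ℝ e) (hT : ∀ j, T (e j) = μ j • e j) (hμ : Antitone μ)
    {ι : Type*} [Fintype ι] {u : ι → V} (hu : Orthonormal ℝ u)
    (hue : ∀ k, u k ∈ span ℝ (Set.range e)) {r : ℕ} (hcard : Fintype.card ι = r) (hr : r ≤ d) :
    ∑ k, ⟪T (u k), u k⟫ ≤ ∑ j ∈ univ.filter (fun j : Fin d => (j : ℕ) < r), μ j := by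
  set c : Fin d → ℝ := fun j => ∑ k, ⟪e j, u k⟫ ^ 2
  have hTu : ∑ k, ⟪T (u k), u k⟫ = ∑ j, μ j * c j := by
    simp_rw [he.inner_apply_self_of_mem_span T hT (hue _), c, mul_sum]
    exact sum_comm
  have hc1 : ∀ j, c j ≤ 1 := fun j => by
    calc c j = ∑ k, ‖⟪u k, e j⟫‖ ^ 2 := by simp [c, real_inner_comm]
      _ ≤ ‖e j‖ ^ 2 := hu.sum_inner_products_le (e j)
      _ = 1 := by simp [he.1 j]
  have hc : ∑ j, c j = r := by
    calc ∑ j, c j = ∑ k, ∑ j, ⟪e j, u k⟫ ^ 2 := sum_comm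
      _ = r := by simp [he.sum_inner_sq_of_mem_span (hue _), hu.1, hcard]
  rw [hTu]
  exact hμ.sum_mul_le_sum_filter_lt hr (fun j => sum_nonneg fun _ _ => sq_nonneg _) hc1 hc

end Spectral

section Gram

variable {V : Type*} [NormedAddCommGroup V] [InnerProductSpace ℝ V]
  {ι : Type*} [Fintype ι] (v : ι → V)

noncomputable def gramOperator : V →ₗ[ℝ] V :=
  ∑ i, (innerₛₗ ℝ (v i)).smulRight (v i)

theorem gramOperator_apply (x : V) : gramOperator v x = ∑ i, ⟪v i, x⟫ • v i := by
  simp [gramOperator]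

theorem inner_gramOperator_left (x y : V) :
    ⟪gramOperator v x, y⟫ = ∑ i, ⟪v i, x⟫ * ⟪v i, y⟫ := by
  simp only [gramOperator_apply, sum_inner, real_inner_smul_left]

theorem inner_gramOperator_self (x : V) : ⟪gramOperator v x, x⟫ = ∑ i, ⟪v i, x⟫ ^ 2 := by
  simp only [inner_gramOperator_left, sq]

theorem isSymmetric_gramOperator : (gramOperator v).IsSymmetric := fun x y => by
  rw [inner_gramOperator_left, real_inner_comm, inner_gramOperator_left]
  exact sum_congr rfl fun i _ => mul_comm _ _

theorem gramOperator_mem_span (x : V) : gramOperator v x ∈ span ℝ (Set.range v) := by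
  rw [gramOperator_apply]
  exact sum_mem fun i _ => smul_mem _ _ (subset_span ⟨i, rfl⟩)

theorem sum_iInf_norm_sub_sq_span_image {κ : Type*} {f : κ → V} (hf : Orthonormal ℝ f)
    (s : Finset κ) :
    ∑ i, ⨅ w : span ℝ (f '' s), ‖v i - (w : V)‖ ^ 2 =
      ∑ i, ‖v i‖ ^ 2 - ∑ k ∈ s, ⟪gramOperator v (f k), f k⟫ := by
  have hfs : Orthonormal ℝ fun k : (s : Set κ) => f k := hf.comp _ Subtype.val_injective
  rw [Set.image_eq_range]
  simp_rw [hfs.iInf_norm_sub_sq_span, sum_sub_distrib, inner_gramOperator_self, real_inner_comm]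
  rw [sum_comm]
  exact congrArg _ (sum_coe_sort s fun k => ∑ i, ⟪v i, f k⟫ ^ 2)

end Gram

/-- Let `V` be a real inner product space and `v₁,…,v_n ∈ V`. Among
all `r`-dimensional subspaces `W ⊆ span{v₁,…,v_n}`, the sum of squared projection
errors `Σᵢ ‖vᵢ − P_W vᵢ‖²` is minimized by the span of the top `r` eigenvectors of
the Gram operator `G = Σᵢ vᵢ ⊗ vᵢ`, and the minimal value equals the sum of the
eigenvalues of `G` beyond the `r` largest.  (The squared projection error onto a
subspace `W` is expressed as the squared distance `⨅ w : W, ‖vᵢ − w‖²`.) -/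
theorem pod_optimality
    {V : Type*} [NormedAddCommGroup V] [InnerProductSpace ℝ V]
    (n r : ℕ) (v : Fin n → V)
    (G : V → V) (hG : ∀ x, G x = ∑ i, (inner ℝ (v i) x : ℝ) • v i)
    (S : Submodule ℝ V) (hS : S = Submodule.span ℝ (Set.range v)) :
    ∃ (d : ℕ) (e : Fin d → V) (μ : Fin d → ℝ),
      Orthonormal ℝ e ∧
      (∀ j, G (e j) = μ j • e j) ∧
      Antitone μ ∧
      Submodule.span ℝ (Set.range e) = S ∧
      (∀ W : Submodule ℝ V, W ≤ S → FiniteDimensional ℝ W →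
        Module.finrank ℝ W = r →
        (∑ i, ⨅ w : Submodule.span ℝ (e '' {j | (j : ℕ) < r}),
            ‖v i - (w : V)‖ ^ 2) ≤
          ∑ i, ⨅ w : W, ‖v i - (w : V)‖ ^ 2) ∧
      (∑ i, ⨅ w : Submodule.span ℝ (e '' {j | (j : ℕ) < r}),
          ‖v i - (w : V)‖ ^ 2) =
        ∑ j ∈ Finset.univ.filter (fun j : Fin d => r ≤ (j : ℕ)), μ j := by
  obtain rfl : G = gramOperator v := funext fun x => by rw [hG, gramOperator_apply]
  subst hS
  have : FiniteDimensional ℝ (span ℝ (Set.range v)) :=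
    FiniteDimensional.span_of_finite ℝ (Set.finite_range v)
  obtain ⟨e, μ, he, heig, hμ, hspan⟩ :=
    (isSymmetric_gramOperator v).exists_orthonormal_eigenvectors_antitone
      fun x _ => gramOperator_mem_span v x
  have hvS : ∀ i, v i ∈ span ℝ (Set.range e) := fun i => by
    rw [hspan]
    exact subset_span ⟨i, rfl⟩
  have hμ_eq : ∀ j, μ j = ⟪gramOperator v (e j), e j⟫ := fun j => by
    rw [heig, real_inner_smul_left, real_inner_self_eq_norm_sq, he.1 j, one_pow, mul_one]
  have htrace : ∑ i, ‖v i‖ ^ 2 = ∑ j, μ j := by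
    simp_rw [hμ_eq, inner_gramOperator_self, ← he.sum_inner_sq_of_mem_span (hvS _),
      real_inner_comm (v _)]
    exact sum_comm
  have htop : ∑ i, ⨅ w : span ℝ (e '' {j | (j : ℕ) < r}), ‖v i - (w : V)‖ ^ 2 =
      ∑ i, ‖v i‖ ^ 2 - ∑ j ∈ univ.filter (fun j : Fin _ => (j : ℕ) < r), μ j := by
    rw [← coe_filter_univ, sum_iInf_norm_sub_sq_span_image v he]
    simp only [hμ_eq]
  refine ⟨_, e, μ, he, heig, hμ, hspan, fun W hWS _ hWr => ?_, ?_⟩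
  · have hu : Orthonormal ℝ fun k => (stdOrthonormalBasis ℝ W k : V) :=
      W.subtypeₗᵢ.orthonormal_comp_iff.mpr (stdOrthonormalBasis ℝ W).orthonormal
    have hW := sum_iInf_norm_sub_sq_span_image v hu univ
    rw [coe_univ, Set.image_univ, span_range_coe_orthonormalBasis] at hW
    have hky_fan := sum_inner_apply_le_sum_eigenvalues _ he heig hμ hu
      (fun k => hspan.ge (hWS (stdOrthonormalBasis ℝ W k).2)) (by simp [hWr])
      (hWr ▸ Submodule.finrank_mono hWS)
    rw [htop, hW]
    exact sub_le_sub_left hky_fan _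
  · rw [htop, htrace, ← sum_filter_add_sum_filter_not univ fun j : Fin _ => (j : ℕ) < r]
    simp only [not_lt, add_sub_cancel_left]
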